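/- arXiv:2401.00821 — 2 statements merged into one kernel-verified Lean document; each statement's English description precedes it below -/
import Mathlib

section
/- Let A be a nonreductive line arrangement of 12 pairwise distinct lines in ℂP² with at least one point of multiplicity 6 and with n_r(A) = 0 for all r ≥ 7. Then n_4(A) ≤ 1, i.e., A has at most one point of multiplicity 4. -/
open Submodule Module

/-- The underlying vector space `ℂ³` for the linear model of `ℂP²`. -/
abbrev Vc : Type := Fin 3 → ℂ

/-- A projective point of `ℂP²`: a 1-dimensional `ℂ`-subspace of `ℂ³`. -/
def IsProjPoint (p : Submodule ℂ Vc) : Prop := Module.finrank ℂ p = 1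

/-- A projective line of `ℂP²`: a 2-dimensional `ℂ`-subspace of `ℂ³`. -/
def IsProjLine (L : Submodule ℂ Vc) : Prop := Module.finrank ℂ L = 2

/-- A line arrangement: a finite set of (pairwise distinct) projective lines. -/
def LineArrangement (A : Finset (Submodule ℂ Vc)) : Prop := ∀ L ∈ A, IsProjLine L

/-- The multiplicity of a projective point `p` with respect to `A`:
the number of lines of `A` containing `p`. -/
noncomputable def mult (A : Finset (Submodule ℂ Vc)) (p : Submodule ℂ Vc) : ℕ :=
  Set.ncard {L : Submodule ℂ Vc | L ∈ A ∧ p ≤ L}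

/-- `nPts A r` is the number of projective points of multiplicity exactly `r` w.r.t. `A`. -/
noncomputable def nPts (A : Finset (Submodule ℂ Vc)) (r : ℕ) : ℕ :=
  Set.ncard {p : Submodule ℂ Vc | IsProjPoint p ∧ mult A p = r}

/-- A multiple point of `A`: a projective point of multiplicity at least 3. -/
def IsMultPoint (A : Finset (Submodule ℂ Vc)) (p : Submodule ℂ Vc) : Prop :=
  IsProjPoint p ∧ 3 ≤ mult A p

/-- `A` is nonreductive if every line of `A` contains at least 3 multiple points of `A`. -/
def Nonreductive (A : Finset (Submodule ℂ Vc)) : Prop :=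
  ∀ L ∈ A, 3 ≤ Set.ncard {p : Submodule ℂ Vc | IsMultPoint A p ∧ p ≤ L}

/-- The projective line `{aX + bY + cZ = 0}`. -/
noncomputable def lineEq (a b c : ℂ) : Submodule ℂ Vc :=
  LinearMap.ker (a • (LinearMap.proj 0 : Vc →ₗ[ℂ] ℂ) + b • (LinearMap.proj 1 : Vc →ₗ[ℂ] ℂ)
    + c • (LinearMap.proj 2 : Vc →ₗ[ℂ] ℂ))

/-- Lattice isomorphism of two arrangements of `n` lines. -/
def LatticeIso (n : ℕ) (A B : Finset (Submodule ℂ Vc)) : Prop :=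
  ∃ L H : Fin n → Submodule ℂ Vc,
    Function.Injective L ∧ Function.Injective H ∧
    (∀ M, M ∈ A ↔ ∃ i, L i = M) ∧ (∀ M, M ∈ B ↔ ∃ i, H i = M) ∧
    ∀ S : Finset (Fin n), S.Nonempty →
      Module.finrank ℂ ↥(⨅ i ∈ S, L i) = Module.finrank ℂ ↥(⨅ i ∈ S, H i)

/-- Projective equivalence of two arrangements. -/
def ProjEquiv (A B : Finset (Submodule ℂ Vc)) : Prop :=
  ∃ g : Vc ≃ₗ[ℂ] Vc,
    (fun M => Submodule.map (g : Vc →ₗ[ℂ] Vc) M) '' (A : Set (Submodule ℂ Vc))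
      = (B : Set (Submodule ℂ Vc))


/-!
Let `p` be a sextic point. Each of the six lines through `p` carries at least two multiple points
besides `p`, and these are distinct for distinct lines, so there are at least twelve multiple points
other than `p`. A point `x ≠ p` lies on at most one line through `p`, hence on at least
`mult x - 1` of the six lines avoiding `p`, and it uses up at least `(mult x - 1) (mult x - 2)` of
their `6 · 5 = 30` ordered pairs; distinct points use up disjoint pairs, since two lines meet only
once. Triple points use up at least `2` pairs and quadruple points `6`, so two quadruple points
and ten further multiple points would need at least `2 · 6 + 10 · 2 = 32 > 30` pairs.
-/

open Finset
open scoped Classical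

lemma IsProjLine.finrank_inf_le_one {L L' : Submodule ℂ Vc} (hL : IsProjLine L)
    (hL' : IsProjLine L') (hne : L ≠ L') : finrank ℂ ↥(L ⊓ L') ≤ 1 := by
  by_contra! h
  have hleft : L ⊓ L' = L := eq_of_le_of_finrank_le inf_le_left (by rw [hL]; omega)
  have hright : L ⊓ L' = L' := eq_of_le_of_finrank_le inf_le_right (by rw [hL']; omega)
  exact hne (hleft.symm.trans hright)

lemma IsProjPoint.eq_of_le_inf {L L' x y : Submodule ℂ Vc} (hx : IsProjPoint x)
    (hy : IsProjPoint y) (hL : IsProjLine L) (hL' : IsProjLine L') (hne : L ≠ L')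
    (hxL : x ≤ L ⊓ L') (hyL : y ≤ L ⊓ L') : x = y := by
  have hinf := hL.finrank_inf_le_one hL' hne
  rw [eq_of_le_of_finrank_le hxL (by rwa [hx]), eq_of_le_of_finrank_le hyL (by rwa [hy])]

lemma IsProjLine.eq_of_le_inf {L L' x y : Submodule ℂ Vc} (hL : IsProjLine L)
    (hL' : IsProjLine L') (hx : IsProjPoint x) (hy : IsProjPoint y) (hxy : x ≠ y)
    (hxL : x ≤ L ⊓ L') (hyL : y ≤ L ⊓ L') : L = L' := by
  by_contra hne
  exact hxy (hx.eq_of_le_inf hy hL hL' hne hxL hyL)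

lemma mult_eq_card_filter (A : Finset (Submodule ℂ Vc)) (x : Submodule ℂ Vc) :
    mult A x = #{L ∈ A | x ≤ L} := by
  rw [mult, ← Set.ncard_coe_finset, coe_filter]

variable {A : Finset (Submodule ℂ Vc)} {p : Submodule ℂ Vc}

lemma mult_le_card_filter_not_le_add_one (hA : LineArrangement A) (hp : IsProjPoint p)
    {x : Submodule ℂ Vc} (hx : IsProjPoint x) (hxp : x ≠ p) :
    mult A x ≤ #{L ∈ {L ∈ A | ¬p ≤ L} | x ≤ L} + 1 := by
  have hthrough_p : #{L ∈ {L ∈ A | x ≤ L} | p ≤ L} ≤ 1 :=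
    card_le_one.mpr fun L hL L' hL' => by
      simp only [mem_filter] at hL hL'
      exact (hA L hL.1.1).eq_of_le_inf (hA L' hL'.1.1) hx hp hxp
        (le_inf hL.1.2 hL'.1.2) (le_inf hL.2 hL'.2)
  have havoiding_p : {L ∈ {L ∈ A | x ≤ L} | ¬p ≤ L} = {L ∈ {L ∈ A | ¬p ≤ L} | x ≤ L} := by
    simp only [filter_filter, and_comm]
  have hsplit := card_filter_add_card_filter_not (s := {L ∈ A | x ≤ L}) (p ≤ ·)
  rw [havoiding_p] at hsplit
  rw [mult_eq_card_filter]
  omega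

lemma sum_card_offDiag_filter_le {S T : Finset (Submodule ℂ Vc)} (hS : ∀ L ∈ S, IsProjLine L)
    (hT : ∀ x ∈ T, IsProjPoint x) :
    ∑ x ∈ T, #({L ∈ S | x ≤ L}.offDiag) ≤ #S.offDiag := by
  have hdisj : (T : Set (Submodule ℂ Vc)).PairwiseDisjoint fun x => {L ∈ S | x ≤ L}.offDiag := by
    intro x hx y hy hxy
    refine disjoint_left.mpr fun ⟨L, L'⟩ hxLL' hyLL' => ?_
    simp only [mem_offDiag, mem_filter] at hxLL' hyLL'
    exact hxy ((hT x hx).eq_of_le_inf (hT y hy) (hS L hxLL'.1.1) (hS L' hxLL'.2.1.1)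
      hxLL'.2.2 (le_inf hxLL'.1.2 hxLL'.2.1.2) (le_inf hyLL'.1.2 hyLL'.2.1.2))
  rw [← card_biUnion hdisj]
  refine card_le_card fun LL' hLL' => ?_
  obtain ⟨x, -, hx⟩ := mem_biUnion.mp hLL'
  exact offDiag_mono (filter_subset _ _) hx

lemma sum_mult_pairs_le (hA : LineArrangement A) (hp : IsProjPoint p)
    {T : Finset (Submodule ℂ Vc)} (hT : ∀ x ∈ T, IsProjPoint x ∧ x ≠ p) :
    ∑ x ∈ T, (mult A x - 1) * (mult A x - 2) ≤ (#A - mult A p) * (#A - mult A p - 1) := by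
  set S := {L ∈ A | ¬p ≤ L}
  have hS : #S = #A - mult A p := by
    have hsplit : #{L ∈ A | p ≤ L} + #S = #A := card_filter_add_card_filter_not _
    rw [mult_eq_card_filter]
    omega
  calc ∑ x ∈ T, (mult A x - 1) * (mult A x - 2)
      ≤ ∑ x ∈ T, #({L ∈ S | x ≤ L}.offDiag) := by
        refine sum_le_sum fun x hx => ?_
        have hk : mult A x ≤ #{L ∈ S | x ≤ L} + 1 :=
          mult_le_card_filter_not_le_add_one hA hp (hT x hx).1 (hT x hx).2
        rw [offDiag_card, ← Nat.mul_sub_one]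
        exact Nat.mul_le_mul (by omega) (by omega)
    _ ≤ #S.offDiag := sum_card_offDiag_filter_le (fun L hL => hA L (mem_filter.mp hL).1)
        fun x hx => (hT x hx).1
    _ = (#A - mult A p) * (#A - mult A p - 1) := by rw [offDiag_card, ← Nat.mul_sub_one, hS]

lemma Nonreductive.exists_multPoints_ne_on_line (hnr : Nonreductive A) {L : Submodule ℂ Vc}
    (hL : L ∈ A) : ∃ t : Finset (Submodule ℂ Vc),
      (∀ x ∈ t, IsMultPoint A x ∧ x ≤ L ∧ x ≠ p) ∧ 2 ≤ #t := by
  have hfin : {x | IsMultPoint A x ∧ x ≤ L}.Finite :=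
    Set.finite_of_ncard_ne_zero (by have := hnr L hL; omega)
  refine ⟨hfin.toFinset.erase p, fun x hx => ?_, ?_⟩
  · obtain ⟨hxp, hxL⟩ := mem_erase.mp hx
    exact ⟨(hfin.mem_toFinset.mp hxL).1, (hfin.mem_toFinset.mp hxL).2, hxp⟩
  · have h3 := hnr L hL
    rw [Set.ncard_eq_toFinset_card _ hfin] at h3
    have herase := pred_card_le_card_erase (s := hfin.toFinset) (a := p)
    omega

lemma Nonreductive.exists_multPoints_ne (hA : LineArrangement A) (hnr : Nonreductive A)
    (hp : IsProjPoint p) : ∃ T : Finset (Submodule ℂ Vc),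
      (∀ x ∈ T, IsMultPoint A x ∧ x ≠ p) ∧ 2 * mult A p ≤ #T := by
  choose! t ht using fun L (hL : L ∈ {L ∈ A | p ≤ L}) =>
    hnr.exists_multPoints_ne_on_line (p := p) (mem_filter.mp hL).1
  have hdisj : (({L ∈ A | p ≤ L} : Finset _) : Set (Submodule ℂ Vc)).PairwiseDisjoint t := by
    intro L hL L' hL' hne
    refine disjoint_left.mpr fun x hxL hxL' => hne ?_
    obtain ⟨hLA, hpL⟩ := mem_filter.mp hL
    obtain ⟨hL'A, hpL'⟩ := mem_filter.mp hL'
    obtain ⟨hx, hxL, hxp⟩ := (ht L hL).1 x hxL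
    exact (hA L hLA).eq_of_le_inf (hA L' hL'A) hx.1 hp hxp
      (le_inf hxL ((ht L' hL').1 x hxL').2.1) (le_inf hpL hpL')
  refine ⟨{L ∈ A | p ≤ L}.biUnion t, fun x hx => ?_, ?_⟩
  · obtain ⟨L, hL, hxL⟩ := mem_biUnion.mp hx
    exact ⟨((ht L hL).1 x hxL).1, ((ht L hL).1 x hxL).2.2⟩
  · rw [card_biUnion hdisj, mult_eq_card_filter, mul_comm, ← smul_eq_mul]
    exact card_nsmul_le_sum _ _ _ fun L hL => (ht L hL).2

theorem nonreductive_sextic_at_most_one_quadruple_general (A : Finset (Submodule ℂ Vc))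
    (hA : LineArrangement A) (hcard : A.card = 12) (hnr : Nonreductive A)
    (h6 : 1 ≤ nPts A 6) :
    nPts A 4 ≤ 1 := by
  obtain ⟨p, hp, hp6⟩ := Set.nonempty_of_ncard_ne_zero (Nat.one_le_iff_ne_zero.mp h6)
  by_contra! h4
  change 1 < Set.ncard _ at h4
  obtain ⟨q₁, ⟨hq₁, hq₁4⟩, q₂, ⟨hq₂, hq₂4⟩, hq⟩ :=
    (Set.one_lt_ncard (Set.finite_of_ncard_pos (by omega))).mp h4
  obtain ⟨T, hT, hT12⟩ := hnr.exists_multPoints_ne hA hp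
  have hQ : ∀ q ∈ ({q₁, q₂} : Finset _), IsProjPoint q ∧ q ≠ p := by
    simp only [mem_insert, mem_singleton, forall_eq_or_imp, forall_eq]
    exact ⟨⟨hq₁, ne_of_apply_ne (mult A) (by omega)⟩, hq₂, ne_of_apply_ne (mult A) (by omega)⟩
  have hpairs := sum_mult_pairs_le hA hp (T := T ∪ {q₁, q₂}) fun x hx =>
    (mem_union.mp hx).elim (fun hxT => ⟨(hT x hxT).1.1, (hT x hxT).2⟩) (hQ x)
  rw [← sum_sdiff subset_union_right, union_sdiff_right, sum_pair hq, hq₁4, hq₂4, hcard, hp6]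
    at hpairs
  have htriples : #(T \ {q₁, q₂}) • 2 ≤ ∑ x ∈ T \ {q₁, q₂}, (mult A x - 1) * (mult A x - 2) :=
    card_nsmul_le_sum _ _ _ fun x hx => by
      have hx3 := (hT x (mem_sdiff.mp hx).1).1.2
      exact Nat.mul_le_mul (n₁ := 2) (m₁ := 1) (by omega) (by omega)
  have hcard_sdiff := le_card_sdiff {q₁, q₂} T
  have hcard_pair := card_le_two (a := q₁) (b := q₂)
  rw [smul_eq_mul] at htriples
  omega

/-- A nonreductive arrangement of 12 lines with a sextic point and no point of multiplicity
at least 7 has at most one quadruple point. -/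
theorem nonreductive_sextic_at_most_one_quadruple (A : Finset (Submodule ℂ Vc))
    (hA : LineArrangement A) (hcard : A.card = 12) (hnr : Nonreductive A)
    (h6 : 1 ≤ nPts A 6) (h7 : ∀ r, 7 ≤ r → nPts A r = 0) :
    nPts A 4 ≤ 1 :=
  nonreductive_sextic_at_most_one_quadruple_general A hA hcard hnr h6
end

section
/- Set t_1 = 1/2 and let s = √(1/2) be the positive real square root. Define A_+ to be the arrangement of the 12 projective lines {X=0}, {Y=0}, {Z=0}, {X-Z=0}, {Y-Z=0}, {X-t_1 Z=0}, {X-t_2 Z=0}, {X-t_3 Z=0}, {X+(t_2-1)Y-t_2 Z=0}, {X+(t_2-t_1)Y-t_2 Z=0}, {X-t_3 Y=0}, {X+(t_1-t_2)Y-t_1 Z=0} with t_2 = s and t_3 = 1 - s, and define A_- to be the arrangement of the same 12 lines with t_2 = -s and t_3 = 1 + s. Then A_+ and A_- are lattice isomorphic, but they are not projectively equivalent. -/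
open Submodule Module

/-!
Both arrangements are images of one arrangement with coefficients in `ℤ√2`, under the two
embeddings `ℤ√2 → ℂ` sending `√2 ↦ ±√2`. In `ℂP²` the dimension of an intersection of pairwise
distinct lines depends only on which triples among them are concurrent, i.e. on which `3 × 3`
minors of the coefficient matrix vanish; these minors lie in `ℤ√2` and both embeddings are
injective, so the two arrangements are lattice isomorphic.

A projective equivalence would permute the twelve lines preserving concurrency. Counting the lines
through the intersection points on each line shows that such a permutation fixes `X = 0`, `Z = 0`,
`X = Z/2` and `X = t₂Z`, four lines of the pencil through `(0 : 1 : 0)`. A projectivity fixing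
three lines of a pencil fixes the whole pencil (it preserves cross-ratios), so it cannot send
`X = √(1/2) Z` to `X = -√(1/2) Z`.
-/

open Matrix Zsqrtd

lemma mem_lineEq {a b c : ℂ} {v : Vc} : v ∈ lineEq a b c ↔ a * v 0 + b * v 1 + c * v 2 = 0 := by
  simp [lineEq]

noncomputable def lineOf (u : Fin 3 → ℂ) : Submodule ℂ Vc := lineEq (u 0) (u 1) (u 2)

lemma mem_lineOf {u x : Fin 3 → ℂ} : x ∈ lineOf u ↔ u ⬝ᵥ x = 0 := by
  simp [lineOf, mem_lineEq, dotProduct, Fin.sum_univ_three]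

lemma lineOf_smul {c : ℂ} (hc : c ≠ 0) (u : Fin 3 → ℂ) : lineOf (c • u) = lineOf u := by
  ext x
  simp [mem_lineOf, smul_dotProduct, hc]

lemma finrank_lineOf {u : Fin 3 → ℂ} (hu : u ≠ 0) : finrank ℂ (lineOf u) = 2 := by
  let f : Module.Dual ℂ Vc :=
    u 0 • LinearMap.proj 0 + u 1 • LinearMap.proj 1 + u 2 • LinearMap.proj 2
  have hf : f ≠ 0 := by
    refine fun h => hu (dotProduct_eq_zero_iff.1 fun x => ?_)
    simpa [f, dotProduct, Fin.sum_univ_three] using LinearMap.congr_fun h x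
  have := Module.Dual.finrank_ker_add_one_of_ne_zero hf
  rw [Module.finrank_fin_fun] at this
  exact Nat.add_right_cancel this

lemma inf_lineOf_eq_span_cross {u v : Fin 3 → ℂ} (h : u ⨯₃ v ≠ 0) :
    lineOf u ⊓ lineOf v = ℂ ∙ (u ⨯₃ v) := by
  refine le_antisymm (fun x hx => ?_) ?_
  · rw [mem_inf, mem_lineOf, mem_lineOf] at hx
    have hcross : (u ⨯₃ v) ⨯₃ x = 0 := by
      rw [← cross_anticomm, cross_cross_eq_smul_sub_smul', dotProduct_comm x, hx.1, hx.2]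
      simp
    rw [mem_span_singleton]
    by_contra! hx'
    exact crossProduct_ne_zero_iff_linearIndependent.2 ((LinearIndependent.pair_iff' h).2 hx')
      hcross
  · rw [span_singleton_le_iff_mem, mem_inf, mem_lineOf, mem_lineOf]
    exact ⟨dot_self_cross u v, dot_cross_self u v⟩

lemma inf_inf_lineOf_eq_bot_iff (u v w : Fin 3 → ℂ) :
    lineOf u ⊓ lineOf v ⊓ lineOf w = ⊥ ↔ u ⬝ᵥ v ⨯₃ w ≠ 0 := by
  have hmem : ∀ x, x ∈ lineOf u ⊓ lineOf v ⊓ lineOf w ↔ (of ![u, v, w]) *ᵥ x = 0 := by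
    intro x
    simp [mem_lineOf, ← List.ofFn_inj, List.ofFn_succ, and_assoc]
  rw [triple_product_eq_det]
  change _ ↔ ¬(of ![u, v, w]).det = 0
  rw [← exists_mulVec_eq_zero_iff, eq_bot_iff]
  simp only [SetLike.le_def, hmem, mem_bot]
  refine ⟨fun h ⟨x, hx0, hx⟩ => hx0 (h hx), fun h x hx => ?_⟩
  by_contra hx0
  exact h ⟨x, hx0, hx⟩

lemma lineOf_ne_of_cross_ne_zero {u v : Fin 3 → ℂ} (h : u ⨯₃ v ≠ 0) : lineOf u ≠ lineOf v := by
  intro huv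
  have hu : u ≠ 0 := by
    rintro rfl
    simp at h
  have := finrank_span_singleton (K := ℂ) h
  rw [← inf_lineOf_eq_span_cross h, ← huv, inf_idem, finrank_lineOf hu] at this
  omega

open Classical in
lemma finrank_iInf_lineOf {ι : Type*} {w : ι → Fin 3 → ℂ} (hw0 : ∀ i, w i ≠ 0)
    (hw : Pairwise fun i j => w i ⨯₃ w j ≠ 0) {S : Finset ι} (hS : S.Nonempty) :
    finrank ℂ ↥(⨅ i ∈ S, lineOf (w i)) =
      if ∃ i ∈ S, ∃ j ∈ S, i ≠ j then
        if ∀ i ∈ S, ∀ j ∈ S, ∀ k ∈ S, w i ⬝ᵥ w j ⨯₃ w k = 0 then 1 else 0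
      else 2 := by
  split_ifs with hpair hconc
  · obtain ⟨i, hi, j, hj, hij⟩ := hpair
    suffices ⨅ k ∈ S, lineOf (w k) = ℂ ∙ (w i ⨯₃ w j) by
      rw [this, finrank_span_singleton (hw hij)]
    refine le_antisymm ?_ ?_
    · rw [← inf_lineOf_eq_span_cross (hw hij)]
      exact le_inf (iInf₂_le i hi) (iInf₂_le j hj)
    · simp only [le_iInf_iff, span_singleton_le_iff_mem, mem_lineOf]
      intro k hk
      rw [triple_product_permutation]
      exact hconc i hi j hj k hk
  · push Not at hconc
    obtain ⟨i, hi, j, hj, k, hk, hijk⟩ := hconc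
    have hle : ⨅ l ∈ S, lineOf (w l) ≤ lineOf (w i) ⊓ lineOf (w j) ⊓ lineOf (w k) :=
      le_inf (le_inf (iInf₂_le i hi) (iInf₂_le j hj)) (iInf₂_le k hk)
    rw [(inf_inf_lineOf_eq_bot_iff _ _ _).2 hijk, le_bot_iff] at hle
    rw [hle, finrank_bot]
  · push Not at hpair
    obtain ⟨i, hi⟩ := hS
    obtain rfl : S = {i} := Finset.eq_singleton_iff_unique_mem.2 ⟨hi, fun j hj => hpair j hj i hi⟩
    rw [Finset.iInf_singleton, finrank_lineOf (hw0 i)]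

lemma RingHom.map_crossProduct {R S : Type*} [CommRing R] [CommRing S] (f : R →+* S)
    (u v : Fin 3 → R) : f ∘ (u ⨯₃ v) = f ∘ u ⨯₃ f ∘ v := by
  ext i
  fin_cases i <;> simp [cross_apply]

lemma RingHom.comp_ne_zero {R S ι : Type*} [NonAssocSemiring R] [NonAssocSemiring S]
    {f : R →+* S} (hf : Function.Injective f) {v : ι → R} (hv : v ≠ 0) : f ∘ v ≠ 0 :=
  fun h => hv (hf.comp_left (h.trans (funext fun _ => (map_zero f).symm)))

lemma finrank_iInf_lineOf_comp_eq {ι R : Type*} [CommRing R] {c : ι → Fin 3 → R}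
    (hc0 : ∀ i, c i ≠ 0) (hc : Pairwise fun i j => c i ⨯₃ c j ≠ 0) {φ ψ : R →+* ℂ}
    (hφ : Function.Injective φ) (hψ : Function.Injective ψ) {S : Finset ι} (hS : S.Nonempty) :
    finrank ℂ ↥(⨅ i ∈ S, lineOf (φ ∘ c i)) = finrank ℂ ↥(⨅ i ∈ S, lineOf (ψ ∘ c i)) := by
  have triple_eq_zero_iff : ∀ {χ : R →+* ℂ}, Function.Injective χ → ∀ i j k,
      χ ∘ c i ⬝ᵥ χ ∘ c j ⨯₃ χ ∘ c k = 0 ↔ c i ⬝ᵥ c j ⨯₃ c k = 0 := fun hχ i j k => by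
    rw [← RingHom.map_crossProduct, ← RingHom.map_dotProduct, map_eq_zero_iff _ hχ]
  have key : ∀ χ : R →+* ℂ, Function.Injective χ →
      finrank ℂ ↥(⨅ i ∈ S, lineOf (χ ∘ c i)) = finrank ℂ ↥(⨅ i ∈ S, lineOf (φ ∘ c i)) := by
    intro χ hχ
    rw [finrank_iInf_lineOf (fun i => RingHom.comp_ne_zero hχ (hc0 i)) ?_ hS,
      finrank_iInf_lineOf (fun i => RingHom.comp_ne_zero hφ (hc0 i)) ?_ hS]
    · classical
      refine if_congr Iff.rfl (if_congr ?_ rfl rfl) rfl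
      simp only [triple_eq_zero_iff hχ, triple_eq_zero_iff hφ]
    all_goals
      intro i j hij
      rw [← RingHom.map_crossProduct]
      exact RingHom.comp_ne_zero ‹_› (hc hij)
  exact (key ψ hψ).symm

lemma ProjEquiv.exists_perm {ι : Type*} [Finite ι] {A B : Finset (Submodule ℂ Vc)}
    {L H : ι → Submodule ℂ Vc} (hL : Function.Injective L) (hA : ∀ M, M ∈ A ↔ ∃ i, L i = M)
    (hB : ∀ M, M ∈ B ↔ ∃ i, H i = M) (h : ProjEquiv A B) :
    ∃ (g : Vc ≃ₗ[ℂ] Vc) (σ : Equiv.Perm ι), ∀ i, (L i).map (g : Vc →ₗ[ℂ] Vc) = H (σ i) := by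
  obtain ⟨g, hg⟩ := h
  have hex : ∀ i, ∃ j, H j = (L i).map (g : Vc →ₗ[ℂ] Vc) := fun i =>
    (hB _).1 (by rw [← Finset.mem_coe, ← hg]; exact ⟨L i, (hA _).2 ⟨i, rfl⟩, rfl⟩)
  choose σ hσ using hex
  have hσ_inj : Function.Injective σ := fun i j hij =>
    hL (map_injective_of_injective g.injective (by rw [← hσ, ← hσ, hij]))
  exact ⟨g, Equiv.ofBijective σ hσ_inj.bijective_of_finite, fun i => (hσ i).symm⟩

lemma eq_of_map_lineEq_pencil (g : Vc ≃ₗ[ℂ] Vc) {a t t' : ℂ} (ha : a ≠ 0)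
    (hX : (lineEq 1 0 0).map (g : Vc →ₗ[ℂ] Vc) = lineEq 1 0 0)
    (hZ : (lineEq 0 0 1).map (g : Vc →ₗ[ℂ] Vc) = lineEq 0 0 1)
    (hXa : (lineEq 1 0 (-a)).map (g : Vc →ₗ[ℂ] Vc) = lineEq 1 0 (-a))
    (hXt : (lineEq 1 0 (-t)).map (g : Vc →ₗ[ℂ] Vc) = lineEq 1 0 (-t')) : t = t' := by
  have maps : ∀ {p q : Submodule ℂ Vc}, p.map (g : Vc →ₗ[ℂ] Vc) = q → ∀ v ∈ p, g v ∈ q := by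
    rintro p q rfl v hv
    exact mem_map_of_mem hv
  have hg : ∀ v : Vc, g v = v 0 • g ![1, 0, 0] + v 1 • g ![0, 1, 0] + v 2 • g ![0, 0, 1] := by
    intro v
    rw [← map_smul, ← map_smul, ← map_smul, ← map_add, ← map_add]
    congr 1
    ext k
    fin_cases k <;> simp
  have x1 := maps hX ![0, 1, 0] (by simp [mem_lineEq])
  have x2 := maps hX ![0, 0, 1] (by simp [mem_lineEq])
  have z0 := maps hZ ![1, 0, 0] (by simp [mem_lineEq])
  have la := maps hXa ![a, 0, 1] (by simp [mem_lineEq])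
  have lt := maps hXt ![t, 0, 1] (by simp [mem_lineEq])
  rw [hg] at la lt
  simp only [mem_lineEq] at x1 x2 z0 la lt
  simp only [one_mul, zero_mul, add_zero, zero_add, Fin.isValue, cons_val, Pi.add_apply,
    Pi.smul_apply, smul_eq_mul] at x1 x2 z0 la lt
  have hα : g ![1, 0, 0] 0 ≠ 0 := by
    intro hα
    have h := congrFun (hg (g.symm ![1, 0, 0])) 0
    simp [hα, x1, x2] at h
  have hαγ : g ![1, 0, 0] 0 = g ![0, 0, 1] 2 :=
    mul_left_cancel₀ ha (by linear_combination la - x2 + a * a * z0)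
  exact (mul_right_inj' hα).1 (by linear_combination lt - x2 + t' * t * z0 - t' * hαγ)

namespace Figure42

open Finset

/-- Coefficient vectors of the twelve lines, with `t₁ = 1/2`, `t₂ = t` and `t₃ = 1 - t`. -/
noncomputable def lineCoeffs (t : ℂ) : Fin 12 → Fin 3 → ℂ :=
  ![![1, 0, 0], ![0, 1, 0], ![0, 0, 1], ![1, 0, -1], ![0, 1, -1], ![1, 0, -(1 / 2)], ![1, 0, -t],
    ![1, 0, -(1 - t)], ![1, t - 1, -t], ![1, t - 1 / 2, -t], ![1, -(1 - t), 0],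
    ![1, 1 / 2 - t, -(1 / 2)]]

/-- Twice `lineCoeffs (√2 / 2)`, over `ℤ√2`: `⟨a, b⟩` stands for `a + b√2`. -/
def coeffs : Fin 12 → Fin 3 → ℤ√2 :=
  ![![2, 0, 0], ![0, 2, 0], ![0, 0, 2], ![2, 0, -2], ![0, 2, -2], ![2, 0, -1],
    ![2, 0, ⟨0, -1⟩], ![2, 0, ⟨-2, 1⟩], ![2, ⟨-2, 1⟩, ⟨0, -1⟩], ![2, ⟨-1, 1⟩, ⟨0, -1⟩],
    ![2, ⟨-2, 1⟩, 0], ![2, ⟨1, -1⟩, -1]]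

def Concurrent (a b c : Fin 12) : Prop := coeffs a ⬝ᵥ coeffs b ⨯₃ coeffs c = 0

instance (a b c : Fin 12) : Decidable (Concurrent a b c) :=
  inferInstanceAs (Decidable (_ = _))

/-- For `a ≠ b`, the number of lines through the point where lines `a` and `b` meet. -/
def multiplicity (a b : Fin 12) : ℕ := #{k | Concurrent a b k}

def degree (a : Fin 12) : ℕ := ∑ b, multiplicity a b

lemma ringHom_injective (φ : ℤ√2 →+* ℂ) : Function.Injective φ := by
  simpa using lift_injective (lift.symm φ) fun n h => Int.prime_two.not_isSquare ⟨n, h⟩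

lemma lineOf_lineCoeffs {φ : ℤ√2 →+* ℂ} {t : ℂ} (ht : φ sqrtd = 2 * t) (i : Fin 12) :
    lineOf (lineCoeffs t i) = lineOf (φ ∘ coeffs i) := by
  have hφ : ∀ x y : ℤ, φ ⟨x, y⟩ = x + y * (2 * t) := fun x y => by
    rw [decompose, map_add, map_mul, ht, map_intCast, map_intCast, mul_comm]
  have : φ ∘ coeffs i = (2 : ℂ) • lineCoeffs t i := by
    fin_cases i <;> ext k <;> fin_cases k <;> simp [coeffs, lineCoeffs, hφ] <;> ring
  rw [this, lineOf_smul two_ne_zero]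

lemma coeffs_ne_zero : ∀ i, coeffs i ≠ 0 := by decide +kernel

lemma cross_coeffs_ne_zero : Pairwise fun i j => coeffs i ⨯₃ coeffs j ≠ 0 := by
  unfold Pairwise
  decide +kernel

lemma lineOf_lineCoeffs_injective {φ : ℤ√2 →+* ℂ} {t : ℂ} (ht : φ sqrtd = 2 * t) :
    Function.Injective fun i => lineOf (lineCoeffs t i) := by
  intro i j hij
  by_contra hne
  simp only [lineOf_lineCoeffs ht] at hij
  refine lineOf_ne_of_cross_ne_zero ?_ hij
  rw [← RingHom.map_crossProduct]
  exact RingHom.comp_ne_zero (ringHom_injective φ) (cross_coeffs_ne_zero hne)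

lemma inf_inf_lineOf_eq_bot_iff_not_concurrent {φ : ℤ√2 →+* ℂ} {t : ℂ} (ht : φ sqrtd = 2 * t)
    (a b c : Fin 12) :
    lineOf (lineCoeffs t a) ⊓ lineOf (lineCoeffs t b) ⊓ lineOf (lineCoeffs t c) = ⊥ ↔
      ¬Concurrent a b c := by
  rw [lineOf_lineCoeffs ht, lineOf_lineCoeffs ht, lineOf_lineCoeffs ht, inf_inf_lineOf_eq_bot_iff,
    ← RingHom.map_crossProduct, ← RingHom.map_dotProduct, Ne,
    map_eq_zero_iff _ (ringHom_injective φ), Concurrent]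

lemma concurrent_apply_iff {φ ψ : ℤ√2 →+* ℂ} {t t' : ℂ} (ht : φ sqrtd = 2 * t)
    (ht' : ψ sqrtd = 2 * t') {g : Vc ≃ₗ[ℂ] Vc} {σ : Equiv.Perm (Fin 12)}
    (hσ : ∀ i, (lineOf (lineCoeffs t i)).map (g : Vc →ₗ[ℂ] Vc) = lineOf (lineCoeffs t' (σ i)))
    (a b c : Fin 12) : Concurrent (σ a) (σ b) (σ c) ↔ Concurrent a b c := by
  rw [← not_iff_not, ← inf_inf_lineOf_eq_bot_iff_not_concurrent ht',
    ← inf_inf_lineOf_eq_bot_iff_not_concurrent ht, ← hσ, ← hσ, ← hσ, ← map_inf _ g.injective,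
    ← map_inf _ g.injective, Submodule.map_eq_bot_iff]

lemma multiplicity_perm {σ : Equiv.Perm (Fin 12)}
    (hσ : ∀ a b c, Concurrent (σ a) (σ b) (σ c) ↔ Concurrent a b c) (a b : Fin 12) :
    multiplicity (σ a) (σ b) = multiplicity a b :=
  (card_equiv σ (by simp [hσ])).symm

lemma degree_perm {σ : Equiv.Perm (Fin 12)}
    (hσ : ∀ a b c, Concurrent (σ a) (σ b) (σ c) ↔ Concurrent a b c) (a : Fin 12) :
    degree (σ a) = degree a := by
  rw [degree, ← Equiv.sum_comp σ]
  simp only [multiplicity_perm hσ, degree]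

/-- Lines `4`, `6` and `9` are the only lines of their degree; lines `0`, `2`, `5` share a degree
and are told apart by how they meet lines `4` and `9`. -/
lemma perm_apply_eq_self {σ : Equiv.Perm (Fin 12)}
    (hσ : ∀ a b c, Concurrent (σ a) (σ b) (σ c) ↔ Concurrent a b c) :
    σ 0 = 0 ∧ σ 2 = 2 ∧ σ 5 = 5 ∧ σ 6 = 6 := by
  have h4 : σ 4 = 4 :=
    (by decide +kernel : ∀ v, degree v = degree 4 → v = 4) _ (degree_perm hσ 4)
  have h9 : σ 9 = 9 :=
    (by decide +kernel : ∀ v, degree v = degree 9 → v = 9) _ (degree_perm hσ 9)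
  have m4 : ∀ a, multiplicity (σ a) 4 = multiplicity a 4 := fun a => by
    rw [← multiplicity_perm hσ a 4, h4]
  have m9 : ∀ a, multiplicity (σ a) 9 = multiplicity a 9 := fun a => by
    rw [← multiplicity_perm hσ a 9, h9]
  refine ⟨?_, ?_, ?_, ?_⟩
  · exact (by decide +kernel : ∀ v, degree v = degree 0 → multiplicity v 4 = multiplicity 0 4 →
      v = 0) _ (degree_perm hσ 0) (m4 0)
  · exact (by decide +kernel : ∀ v, degree v = degree 2 → multiplicity v 4 = multiplicity 2 4 →
      multiplicity v 9 = multiplicity 2 9 → v = 2) _ (degree_perm hσ 2) (m4 2) (m9 2)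
  · exact (by decide +kernel : ∀ v, degree v = degree 5 → multiplicity v 9 = multiplicity 5 9 →
      v = 5) _ (degree_perm hσ 5) (m9 5)
  · exact (by decide +kernel : ∀ v, degree v = degree 6 → v = 6) _ (degree_perm hσ 6)

lemma latticeIso {φ ψ : ℤ√2 →+* ℂ} {t t' : ℂ} (ht : φ sqrtd = 2 * t) (ht' : ψ sqrtd = 2 * t')
    {A B : Finset (Submodule ℂ Vc)} (hA : ∀ M, M ∈ A ↔ ∃ i, lineOf (lineCoeffs t i) = M)
    (hB : ∀ M, M ∈ B ↔ ∃ i, lineOf (lineCoeffs t' i) = M) : LatticeIso 12 A B := by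
  refine ⟨fun i => lineOf (lineCoeffs t i), fun i => lineOf (lineCoeffs t' i),
    lineOf_lineCoeffs_injective ht, lineOf_lineCoeffs_injective ht', hA, hB, fun S hS => ?_⟩
  rw [funext (lineOf_lineCoeffs ht), funext (lineOf_lineCoeffs ht')]
  exact finrank_iInf_lineOf_comp_eq coeffs_ne_zero cross_coeffs_ne_zero (ringHom_injective φ)
    (ringHom_injective ψ) hS

lemma not_projEquiv {φ ψ : ℤ√2 →+* ℂ} {t t' : ℂ} (ht : φ sqrtd = 2 * t)
    (ht' : ψ sqrtd = 2 * t') (hne : t ≠ t') {A B : Finset (Submodule ℂ Vc)}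
    (hA : ∀ M, M ∈ A ↔ ∃ i, lineOf (lineCoeffs t i) = M)
    (hB : ∀ M, M ∈ B ↔ ∃ i, lineOf (lineCoeffs t' i) = M) : ¬ProjEquiv A B := by
  intro h
  obtain ⟨g, σ, hσ⟩ := h.exists_perm (lineOf_lineCoeffs_injective ht) hA hB
  have fixes : ∀ i, σ i = i →
      (lineOf (lineCoeffs t i)).map (g : Vc →ₗ[ℂ] Vc) = lineOf (lineCoeffs t' i) :=
    fun i hi => by rw [hσ, hi]
  obtain ⟨h0, h2, h5, h6⟩ := perm_apply_eq_self (concurrent_apply_iff ht ht' hσ)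
  exact hne (eq_of_map_lineEq_pencil g (a := 1 / 2) (by norm_num) (fixes 0 h0) (fixes 2 h2)
    (fixes 5 h5) (fixes 6 h6))

end Figure42

open Classical in
/-- The two arrangements of Figure 42 (with `t₂ = ±√(1/2)`) are lattice isomorphic but not
projectively equivalent. -/
theorem figure42_potential_zariski_pair :
    let t1 : ℂ := 1 / 2
    let s : ℂ := ((Real.sqrt (1 / 2) : ℝ) : ℂ)
    let mk : ℂ → ℂ → Finset (Submodule ℂ Vc) := fun t2 t3 =>
      ([lineEq 1 0 0, lineEq 0 1 0, lineEq 0 0 1,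
        lineEq 1 0 (-1), lineEq 0 1 (-1),
        lineEq 1 0 (-t1), lineEq 1 0 (-t2), lineEq 1 0 (-t3),
        lineEq 1 (t2 - 1) (-t2), lineEq 1 (t2 - t1) (-t2),
        lineEq 1 (-t3) 0, lineEq 1 (t1 - t2) (-t1)] : List (Submodule ℂ Vc)).toFinset
    LatticeIso 12 (mk s (1 - s)) (mk (-s) (1 + s)) ∧
      ¬ ProjEquiv (mk s (1 - s)) (mk (-s) (1 + s)) := by
  intro t1 s mk
  have hs : s * s = 1 / 2 := by
    simp only [s, ← Complex.ofReal_mul, Real.mul_self_sqrt one_half_pos.le]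
    norm_num
  obtain ⟨φ, hpos⟩ : ∃ φ : ℤ√2 →+* ℂ, φ sqrtd = 2 * s :=
    ⟨lift ⟨2 * s, by linear_combination 4 * hs⟩, by simp⟩
  obtain ⟨ψ, hneg⟩ : ∃ ψ : ℤ√2 →+* ℂ, ψ sqrtd = 2 * -s :=
    ⟨lift ⟨2 * -s, by linear_combination 4 * hs⟩, by simp⟩
  have hmem : ∀ t M, M ∈ mk t (1 - t) ↔ ∃ i, lineOf (Figure42.lineCoeffs t i) = M := by
    intro t M
    show M ∈ (List.ofFn fun i => lineOf (Figure42.lineCoeffs t i)).toFinset ↔ _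
    rw [List.mem_toFinset, List.mem_ofFn]
  have hne : s ≠ -s := fun h => by norm_num [show s = 0 by linear_combination h / 2] at hs
  rw [show (1 : ℂ) + s = 1 - -s by ring]
  exact ⟨Figure42.latticeIso hpos hneg (hmem s) (hmem (-s)),
    Figure42.not_projEquiv hpos hneg hne (hmem s) (hmem (-s))⟩
end
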